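/- If α is a badly approximable number (irrational with partial quotients a_j uniformly bounded), then the Kronecker sequence x_i = iα mod 1 is quasi-uniform over [0,1]: for all n ≥ 2, the mesh ratio ρ_n = h_n/q_n satisfies ρ_n ≤ 2 + 2·sup_{j≥1} a_j. -/

import Mathlib

open scoped BigOperators

/-- The Gauss-map iterates: `alphaSeq α m` is `α_m`. -/
noncomputable def alphaSeq (α : ℝ) : ℕ → ℝ
  | 0 => Int.fract α
  | m + 1 => Int.fract (1 / alphaSeq α m)

/-- Partial quotients of the continued fraction of `α`: `partialQuot α (m+1) = a_{m+1} = ⌊1/α_m⌋`. -/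
noncomputable def partialQuot (α : ℝ) : ℕ → ℕ
  | 0 => (⌊α⌋).toNat
  | m + 1 => (⌊1 / alphaSeq α m⌋).toNat

/-- `eta α (m+1) = η_m = ∏_{j=0}^m α_j`, with `eta α 0 = η_{-1} = 1`. -/
noncomputable def eta (α : ℝ) : ℕ → ℝ
  | 0 => 1
  | m + 1 => eta α m * alphaSeq α m

/-- `denomSeq α m = s_m`. -/
noncomputable def denomSeq (α : ℝ) : ℕ → ℕ
  | 0 => 1
  | 1 => partialQuot α 1
  | m + 2 => partialQuot α (m + 2) * denomSeq α (m + 1) + denomSeq α m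

/-- `denomPred α m = s_{m-1}`, with `s_{-1} = 0`. -/
noncomputable def denomPred (α : ℝ) : ℕ → ℕ
  | 0 => 0
  | m + 1 => denomSeq α m

/-- `nSeq α m = n_m = s_m + s_{m-1}` (so `n_0 = 1`). -/
noncomputable def nSeq (α : ℝ) (m : ℕ) : ℕ := denomSeq α m + denomPred α m

/-- The Kronecker sequence `x_i = iα mod 1`. -/
noncomputable def kron (α : ℝ) (i : ℕ) : ℝ := Int.fract (i * α)

/-- Fill distance of the first `n` points of `x` in `[0,1]`. -/
noncomputable def fillDist (x : ℕ → ℝ) (n : ℕ) : ℝ :=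
  ⨆ y : Set.Icc (0:ℝ) 1, ⨅ i : Fin n, |(y : ℝ) - x i|

/-- Separation radius of the first `n` points of `x`. -/
noncomputable def sepRad (x : ℕ → ℝ) (n : ℕ) : ℝ :=
  (1 / 2) * ⨅ p : {p : Fin n × Fin n // p.1 < p.2}, |x p.1.1 - x p.1.2|

/-- The first `n` Kronecker points, sorted increasingly. -/
noncomputable def sortedKron (α : ℝ) (n : ℕ) : List ℝ :=
  ((Finset.range n).image (kron α)).sort (· ≤ ·)

/-- The `n` consecutive gap lengths of the first `n` Kronecker points,
including the wrap-around gap up to `1`. -/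
noncomputable def kronGaps (α : ℝ) (n : ℕ) : List ℝ :=
  List.zipWith (fun a b => b - a) (sortedKron α n) ((sortedKron α n).tail ++ [1])


/-!
Write `β = fract α`, let `p_k / s_k` be the convergents of `β` and `η_{k+1} = |s_k β - p_k|`,
and pick `k` with `s_k < n ≤ s_{k+1}`. Since consecutive convergents form a unimodular pair on
opposite sides of `β`, `|jβ - c| ≥ η_{k+1}` whenever `0 < j < s_{k+1}` (Legendre), so all the
gaps are at least `η_{k+1}`. Since `p_k` and `s_k` are coprime and `s_k η_{k+1} < 1`, the points
`x_0, …, x_{s_k - 1}` are the grid points `j / s_k`, each moved by less than `η_{k+1}`, all in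
the same direction; a point `x_{s_m}`, `m ∈ {k - 1, k}` odd, lies within `η_k` of `1`. Hence
every point of `[0,1]` is within `(a_{k+1} + 1) η_{k+1}` of some `x_i`, `i < n`, by
`η_k = a_{k+1} η_{k+1} + η_{k+2}` and `1 / s_k ≤ η_k + η_{k+1}`.
-/

open Set

theorem abs_sub_le_or_abs_sub_le {K : Type*} [Field K] [LinearOrder K] [IsStrictOrderedRing K]
    {a b y M : K} (ha : a ≤ y + M) (hb : y - M ≤ b)
    (hab : b - a ≤ 2 * M) : |y - a| ≤ M ∨ |y - b| ≤ M := by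
  rcases le_total (y - a) M with hya | hya
  · exact Or.inl (abs_le.2 ⟨by linarith, hya⟩)
  · exact Or.inr (abs_le.2 ⟨by linarith, by linarith⟩)

theorem exists_lt_div_le_le_succ_div {q : ℕ} (hq : 0 < q) {y : ℝ} (hy : y ∈ Icc 0 1) :
    ∃ j < q, (j : ℝ) / q ≤ y ∧ y ≤ ((j + 1 : ℕ) : ℝ) / q := by
  have hqR : (0 : ℝ) < q := by exact_mod_cast hq
  refine ⟨min ⌊y * q⌋₊ (q - 1), by omega, ?_, ?_⟩
  · rw [div_le_iff₀ hqR]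
    calc ((min ⌊y * q⌋₊ (q - 1) : ℕ) : ℝ) ≤ ⌊y * q⌋₊ := by
          exact_mod_cast min_le_left _ _
      _ ≤ y * q := Nat.floor_le (mul_nonneg hy.1 hqR.le)
  · rw [le_div_iff₀ hqR]
    rcases le_total ⌊y * q⌋₊ (q - 1) with hfl | hfl
    · rw [min_eq_left hfl]
      exact_mod_cast (Nat.lt_floor_add_one (y * q)).le
    · rw [min_eq_right hfl, Nat.sub_add_cancel hq]
      nlinarith [hy.2]

theorem exists_abs_sub_le_of_near_grid {S : Set ℝ} {q : ℕ} {ε M : ℝ} (hq : 0 < q)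
    (hgrid : ∀ j < q, ∃ x ∈ S, x - j / q ∈ uIcc 0 ε)
    (hlast : ∃ x ∈ S, x ∈ Icc (1 - M) 1)
    (hεM : |ε| ≤ M) (hgap : 1 / q + |ε| ≤ 2 * M) {y : ℝ} (hy : y ∈ Icc 0 1) :
    ∃ x ∈ S, |y - x| ≤ M := by
  have hqR : (0 : ℝ) < q := by exact_mod_cast hq
  obtain ⟨j, hjq, hjy, hyj⟩ := exists_lt_div_le_le_succ_div hq hy
  obtain ⟨a, haS, ha⟩ := hgrid j hjq
  have ha' : |a - j / q| ≤ |ε| := by simpa using abs_sub_left_of_mem_uIcc ha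
  have hstep : ((j + 1 : ℕ) : ℝ) / q = j / q + 1 / q := by push_cast; ring
  obtain ⟨b, hbS, hyb, hab⟩ : ∃ b ∈ S, y - M ≤ b ∧ b - a ≤ 1 / q + |ε| := by
    rcases (show j + 1 ≤ q from hjq).lt_or_eq with hj1 | hj1
    · obtain ⟨b, hbS, hb⟩ := hgrid (j + 1) hj1
      have hb' : |b - ((j + 1 : ℕ) : ℝ) / q| ≤ |ε| := by
        simpa using abs_sub_left_of_mem_uIcc hb
      have hba : |(b - ((j + 1 : ℕ) : ℝ) / q) - (a - j / q)| ≤ |ε| := by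
        simpa using abs_sub_le_of_uIcc_subset_uIcc (uIcc_subset_uIcc ha hb)
      refine ⟨b, hbS, ?_, ?_⟩
      · linarith [(abs_le.1 hb').1]
      · linarith [(abs_le.1 hba).2]
    · obtain ⟨b, hbS, hb1, hb2⟩ := hlast
      have hone : ((j + 1 : ℕ) : ℝ) / q = 1 := by rw [hj1, div_self hqR.ne']
      refine ⟨b, hbS, by linarith, by linarith [(abs_le.1 ha').1]⟩
  rcases abs_sub_le_or_abs_sub_le (a := a) (by linarith [(abs_le.1 ha').2]) hyb (by linarith)
    with h | h
  · exact ⟨a, haS, h⟩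
  · exact ⟨b, hbS, h⟩

theorem exists_fract_mul_sub_mem_uIcc {β : ℝ} {p q : ℕ} (hpq : p.Coprime q)
    (hε : q * |q * β - p| < 1) {j : ℕ} (hj : j < q) :
    ∃ i < q, Int.fract (i * β) - j / q ∈ uIcc 0 (q * β - p) := by
  rcases Nat.eq_zero_or_pos j with rfl | hj0
  · exact ⟨0, hj, by simp⟩
  obtain ⟨i, hiq, hi⟩ := Nat.exists_mul_mod_eq_of_coprime j hpq (by omega)
  rw [Nat.mod_eq_of_lt hj] at hi
  set ε := (q : ℝ) * β - p with hε_def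
  have hqR : (0 : ℝ) < q := by exact_mod_cast hj0.trans hj
  have hiq' : (i : ℝ) < q := by exact_mod_cast hiq
  have hjq' : (j : ℝ) + 1 ≤ q := by exact_mod_cast hj
  have hj1 : (1 : ℝ) ≤ j := by exact_mod_cast hj0
  have hiε : |i * ε| < 1 := by
    rw [abs_mul, Nat.abs_cast]
    nlinarith [abs_nonneg ε]
  have hdiv : (p * i : ℕ) = q * (p * i / q) + j := by rw [← hi, Nat.div_add_mod]
  have hfract : Int.fract (i * β) = (j + i * ε) / q := by
    rw [Int.fract_eq_iff]
    refine ⟨div_nonneg (by linarith [(abs_lt.1 hiε).1]) hqR.le, ?_, (p * i / q : ℕ), ?_⟩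
    · rw [div_lt_one hqR]; linarith [(abs_lt.1 hiε).2]
    · have hdivR : (p : ℝ) * i = q * (p * i / q : ℕ) + j := by exact_mod_cast hdiv
      rw [Int.cast_natCast, hε_def]
      field_simp
      linarith
  refine ⟨i, hiq, ?_⟩
  have ht0 : 0 ≤ (i : ℝ) / q := by positivity
  have ht1 : (i : ℝ) / q ≤ 1 := (div_le_one hqR).2 hiq'.le
  rw [hfract, show (j + i * ε) / q - j / q = (i / q) * ε by field_simp; ring, mem_uIcc]
  rcases le_total 0 ε with h | h
  · exact Or.inl ⟨by positivity, by nlinarith⟩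
  · exact Or.inr ⟨by nlinarith, by nlinarith⟩

theorem abs_le_abs_add_of_mul_nonneg {R : Type*} [CommRing R] [LinearOrder R]
    [IsStrictOrderedRing R] {a b : R} (h : 0 ≤ a * b) : |a| ≤ |a + b| :=
  sq_le_sq.1 (by nlinarith [sq_nonneg b])

theorem abs_mul_sub_le_of_unimodular {K : Type*} [Field K] [LinearOrder K] [IsStrictOrderedRing K]
    {β : K} {p q p' q' j c : ℤ}
    (hdet : (p' * q - p * q') ^ 2 = 1) (hq : 0 ≤ q)
    (hsign : (q * β - p) * (q' * β - p') ≤ 0) (hj : 0 < j) (hjq : j < q') :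
    |q * β - p| ≤ |j * β - c| := by
  -- Cramer's rule: `j = x q + y q'` and `c = x p + y p'`. Then `x ≠ 0`, and `x, y` have opposite
  -- signs, as do the two errors, so the two terms of `j β - c` below add up without cancelling.
  set D := p' * q - p * q'
  set x := D * (p' * j - q' * c)
  set y := D * (q * c - p * j)
  have hjxy : j = x * q + y * q' := by linear_combination (-j) * hdet
  have hcxy : c = x * p + y * p' := by linear_combination (-c) * hdet
  have hxy : x * y ≤ 0 := by
    by_contra! hpos
    rcases lt_or_gt_of_ne (left_ne_zero_of_mul hpos.ne') with hx | hx
    · have hy : y < 0 := neg_of_mul_pos_right hpos hx.le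
      nlinarith
    · have hy : 0 < y := pos_of_mul_pos_right hpos hx.le
      nlinarith
  have hx : x ≠ 0 := by
    rintro hx0
    rw [hx0, zero_mul, zero_add] at hjxy
    rcases le_or_gt y 0 with hy | hy <;> nlinarith
  have hsplit : (j : K) * β - c = x * (q * β - p) + y * (q' * β - p') := by
    rw [show (j : K) = (x * q + y * q' : ℤ) by rw [hjxy],
      show (c : K) = (x * p + y * p' : ℤ) by rw [hcxy]]
    push_cast
    ring
  have hx1 : (1 : K) ≤ |(x : K)| := by exact_mod_cast Int.one_le_abs hx
  have hxyR : (x : K) * y ≤ 0 := by exact_mod_cast hxy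
  calc |q * β - p| ≤ |(x : K)| * |q * β - p| := le_mul_of_one_le_left (abs_nonneg _) hx1
    _ = |x * (q * β - p)| := (abs_mul _ _).symm
    _ ≤ |j * β - c| := by
      rw [hsplit]
      exact abs_le_abs_add_of_mul_nonneg (by nlinarith [mul_nonneg_of_nonpos_of_nonpos hxyR hsign])

/-- Numerators `p_m` of the convergents `p_m / s_m` of `Int.fract α` (not of `α`: `p_0 = 0`). -/
noncomputable def numSeq (α : ℝ) : ℕ → ℕ
  | 0 => 0
  | 1 => 1
  | m + 2 => partialQuot α (m + 2) * numSeq α (m + 1) + numSeq α m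

variable {α : ℝ}

theorem kron_eq_fract_mul_fract (i : ℕ) : kron α i = Int.fract (i * Int.fract α) :=
  Int.fract_eq_fract.2 ⟨i * ⌊α⌋, by rw [Int.fract]; push_cast; ring⟩

theorem irrational_alphaSeq (hα : Irrational α) : ∀ m, Irrational (alphaSeq α m)
  | 0 => hα.sub_intCast _
  | m + 1 => (one_div (alphaSeq α m) ▸ (irrational_alphaSeq hα m).inv).sub_intCast _

theorem alphaSeq_nonneg (m : ℕ) : 0 ≤ alphaSeq α m := by
  cases m <;> exact Int.fract_nonneg _

theorem alphaSeq_lt_one (m : ℕ) : alphaSeq α m < 1 := by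
  cases m <;> exact Int.fract_lt_one _

theorem alphaSeq_pos (hα : Irrational α) (m : ℕ) : 0 < alphaSeq α m :=
  (alphaSeq_nonneg m).lt_of_ne (irrational_alphaSeq hα m).ne_zero.symm

theorem partialQuot_succ_add_alphaSeq (m : ℕ) :
    (partialQuot α (m + 1) : ℝ) + alphaSeq α (m + 1) = 1 / alphaSeq α m := by
  have hfloor : 0 ≤ ⌊1 / alphaSeq α m⌋ :=
    Int.floor_nonneg.2 (one_div_nonneg.2 (alphaSeq_nonneg m))
  have hcast : ((⌊1 / alphaSeq α m⌋.toNat : ℕ) : ℝ) = ⌊1 / alphaSeq α m⌋ := by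
    exact_mod_cast Int.toNat_of_nonneg hfloor
  rw [partialQuot, alphaSeq, hcast, Int.floor_add_fract]

theorem one_le_partialQuot_succ (hα : Irrational α) (m : ℕ) : 1 ≤ partialQuot α (m + 1) := by
  have hsum := partialQuot_succ_add_alphaSeq (α := α) m
  have hinv : 1 < 1 / alphaSeq α m := by
    rw [lt_div_iff₀ (alphaSeq_pos hα m), one_mul]; exact alphaSeq_lt_one m
  have : (0 : ℝ) < partialQuot α (m + 1) := by linarith [alphaSeq_lt_one (α := α) (m + 1)]
  exact_mod_cast this

theorem eta_pos (hα : Irrational α) : ∀ m, 0 < eta α m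
  | 0 => one_pos
  | m + 1 => mul_pos (eta_pos hα m) (alphaSeq_pos hα m)

theorem eta_antitone (hα : Irrational α) : Antitone (eta α) :=
  antitone_nat_of_succ_le fun m =>
    mul_le_of_le_one_right (eta_pos hα m).le (alphaSeq_lt_one m).le

theorem eta_succ_lt_one (hα : Irrational α) (m : ℕ) : eta α (m + 1) < 1 :=
  calc eta α (m + 1) = eta α m * alphaSeq α m := rfl
    _ < 1 * 1 := mul_lt_mul' (eta_antitone hα (Nat.zero_le m)) (alphaSeq_lt_one m)
        (alphaSeq_pos hα m).le one_pos
    _ = 1 := one_mul 1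

theorem eta_add_two (hα : Irrational α) (m : ℕ) :
    eta α (m + 2) = eta α m - partialQuot α (m + 1) * eta α (m + 1) := by
  have hsum := partialQuot_succ_add_alphaSeq (α := α) m
  have hpos := alphaSeq_pos hα m
  simp only [eta]
  rw [show alphaSeq α (m + 1) = 1 / alphaSeq α m - partialQuot α (m + 1) by linarith]
  field_simp

theorem eta_le_partialQuot_add_one_mul (hα : Irrational α) (m : ℕ) :
    eta α m ≤ (partialQuot α (m + 1) + 1) * eta α (m + 1) := by
  have := eta_add_two hα m
  have := eta_antitone hα (Nat.le_succ (m + 1))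
  linarith

theorem denomSeq_monotone (hα : Irrational α) : Monotone (denomSeq α) := by
  refine monotone_nat_of_le_succ fun m => ?_
  cases m with
  | zero => exact one_le_partialQuot_succ hα 0
  | succ m =>
    show denomSeq α (m + 1) ≤ partialQuot α (m + 2) * denomSeq α (m + 1) + denomSeq α m
    nlinarith [one_le_partialQuot_succ hα (m + 1)]

theorem denomSeq_pos (hα : Irrational α) (m : ℕ) : 0 < denomSeq α m :=
  Nat.lt_of_lt_of_le Nat.one_pos (denomSeq_monotone hα (Nat.zero_le m))

theorem le_denomSeq (hα : Irrational α) : ∀ m, m ≤ denomSeq α m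
  | 0 => Nat.zero_le _
  | 1 => one_le_partialQuot_succ hα 0
  | m + 2 => by
    show m + 2 ≤ partialQuot α (m + 2) * denomSeq α (m + 1) + denomSeq α m
    nlinarith [one_le_partialQuot_succ hα (m + 1), le_denomSeq hα (m + 1), denomSeq_pos hα m]

theorem denomSeq_mul_sub_numSeq (hα : Irrational α) : ∀ m,
    (denomSeq α m : ℝ) * Int.fract α - numSeq α m = (-1) ^ m * eta α (m + 1)
  | 0 => by simp [denomSeq, numSeq, eta, alphaSeq]
  | 1 => by
    have hsum := partialQuot_succ_add_alphaSeq (α := α) 0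
    rw [eq_div_iff (alphaSeq_pos hα 0).ne'] at hsum
    simp only [denomSeq, numSeq, eta, alphaSeq] at *
    push_cast
    linear_combination hsum
  | m + 2 => by
    have ih₀ := denomSeq_mul_sub_numSeq hα m
    have ih₁ := denomSeq_mul_sub_numSeq hα (m + 1)
    have := eta_add_two hα (m + 1)
    simp only [denomSeq, numSeq, show m + 1 + 1 = m + 2 from rfl,
      show m + 1 + 2 = m + 2 + 1 from rfl] at *
    push_cast
    linear_combination (partialQuot α (m + 2) : ℝ) * ih₁ + ih₀ - (-1) ^ m * this

theorem neg_one_pow_sq {R : Type*} [Monoid R] [HasDistribNeg R] (k : ℕ) :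
    ((-1 : R) ^ k) ^ 2 = 1 := by
  rw [← pow_mul, mul_comm, pow_mul, neg_one_sq, one_pow]

theorem numSeq_mul_denomSeq_sub (k : ℕ) :
    (numSeq α (k + 1) * denomSeq α k - numSeq α k * denomSeq α (k + 1) : ℤ) = (-1) ^ k := by
  induction k with
  | zero => simp [numSeq, denomSeq]
  | succ k ih =>
    simp only [numSeq, denomSeq]
    push_cast
    linear_combination -ih

theorem coprime_numSeq_denomSeq (k : ℕ) : (numSeq α k).Coprime (denomSeq α k) := by
  rw [← Nat.isCoprime_iff_coprime]
  refine ⟨-((-1) ^ k * denomSeq α (k + 1)), (-1) ^ k * numSeq α (k + 1), ?_⟩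
  linear_combination (-1) ^ k * numSeq_mul_denomSeq_sub (α := α) k + neg_one_pow_sq (R := ℤ) k

theorem denomSeq_mul_eta_add (hα : Irrational α) (k : ℕ) :
    (denomSeq α (k + 1) : ℝ) * eta α (k + 1) + denomSeq α k * eta α (k + 2) = 1 := by
  have hdet : (numSeq α (k + 1) * denomSeq α k - numSeq α k * denomSeq α (k + 1) : ℝ) =
      (-1) ^ k := by exact_mod_cast numSeq_mul_denomSeq_sub k
  refine mul_left_cancel₀ (pow_ne_zero k (by norm_num : (-1 : ℝ) ≠ 0)) ?_
  linear_combination hdet - denomSeq α (k + 1) * denomSeq_mul_sub_numSeq hα k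
    + denomSeq α k * denomSeq_mul_sub_numSeq hα (k + 1)

theorem denomSeq_mul_eta_succ_lt_one (hα : Irrational α) (k : ℕ) :
    (denomSeq α k : ℝ) * eta α (k + 1) < 1 := by
  have hmono : (denomSeq α k : ℝ) ≤ denomSeq α (k + 1) := by
    exact_mod_cast denomSeq_monotone hα k.le_succ
  have hpos : (0 : ℝ) < denomSeq α k * eta α (k + 2) := by
    have := denomSeq_pos hα k; have := eta_pos hα (k + 2); positivity
  nlinarith [denomSeq_mul_eta_add hα k, eta_pos hα (k + 1)]

theorem one_le_denomSeq_mul_eta_add (hα : Irrational α) (k : ℕ) :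
    1 ≤ (denomSeq α k : ℝ) * (eta α k + eta α (k + 1)) := by
  cases k with
  | zero => simp [denomSeq, eta, alphaSeq_nonneg]
  | succ k =>
    have hmono : (denomSeq α k : ℝ) ≤ denomSeq α (k + 1) := by
      exact_mod_cast denomSeq_monotone hα k.le_succ
    nlinarith [denomSeq_mul_eta_add hα k, eta_pos hα (k + 2)]

theorem kron_denomSeq_of_odd (hα : Irrational α) {m : ℕ} (hm : Odd m) :
    kron α (denomSeq α m) = 1 - eta α (m + 1) := by
  rw [kron_eq_fract_mul_fract, Int.fract_eq_iff]
  refine ⟨by linarith [eta_succ_lt_one hα m], by linarith [eta_pos hα (m + 1)],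
    numSeq α m - 1, ?_⟩
  have := denomSeq_mul_sub_numSeq hα m
  rw [hm.neg_one_pow] at this
  push_cast
  linarith

theorem exists_le_denomSeq_one_sub_eta_le_kron (hα : Irrational α) (k : ℕ) :
    ∃ i ≤ denomSeq α k, 1 - eta α k ≤ kron α i := by
  rcases k.even_or_odd with hk | hk
  · rcases k with _ | m
    · exact ⟨0, Nat.zero_le _, by simp [eta, kron]⟩
    · have hm : Odd m := by simpa [Nat.even_add_one] using hk
      exact ⟨denomSeq α m, denomSeq_monotone hα m.le_succ,
        (kron_denomSeq_of_odd hα hm).ge⟩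
  · refine ⟨denomSeq α k, le_rfl, ?_⟩
    rw [kron_denomSeq_of_odd hα hk]
    linarith [eta_antitone hα k.le_succ]

theorem abs_denomSeq_mul_sub_numSeq (hα : Irrational α) (k : ℕ) :
    |(denomSeq α k : ℝ) * Int.fract α - numSeq α k| = eta α (k + 1) := by
  rw [denomSeq_mul_sub_numSeq hα, abs_mul, abs_pow, abs_neg, abs_one, one_pow, one_mul,
    abs_of_pos (eta_pos hα _)]

theorem eta_succ_le_abs_kron_sub (hα : Irrational α) {k i j : ℕ} (hij : i < j)
    (hji : j < i + denomSeq α (k + 1)) : eta α (k + 1) ≤ |kron α i - kron α j| := by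
  have hε₀ := denomSeq_mul_sub_numSeq hα k
  have hε₁ := denomSeq_mul_sub_numSeq hα (k + 1)
  have hdet :
      (numSeq α (k + 1) * denomSeq α k - numSeq α k * denomSeq α (k + 1) : ℤ) ^ 2 = 1 := by
    rw [numSeq_mul_denomSeq_sub, neg_one_pow_sq]
  have hsign : ((denomSeq α k : ℤ) * Int.fract α - (numSeq α k : ℤ)) *
      ((denomSeq α (k + 1) : ℤ) * Int.fract α - (numSeq α (k + 1) : ℤ)) ≤ 0 := by
    push_cast
    rw [hε₀, hε₁, pow_succ]
    have := mul_pos (eta_pos hα (k + 1)) (eta_pos hα (k + 2))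
    nlinarith [neg_one_pow_sq (R := ℝ) k]
  have hbest := abs_mul_sub_le_of_unimodular (c := ⌊j * Int.fract α⌋ - ⌊i * Int.fract α⌋)
    hdet (by positivity) hsign (j := j - i) (by omega) (by omega)
  push_cast at hbest
  rw [abs_denomSeq_mul_sub_numSeq hα] at hbest
  rw [abs_sub_comm, kron_eq_fract_mul_fract, kron_eq_fract_mul_fract,
    ← Int.self_sub_floor ((i : ℝ) * _), ← Int.self_sub_floor ((j : ℝ) * _)]
  exact hbest.trans_eq (congrArg abs (by ring))

theorem exists_denomSeq_lt_le (hα : Irrational α) {n : ℕ} (hn : 2 ≤ n) :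
    ∃ k, denomSeq α k < n ∧ n ≤ denomSeq α (k + 1) := by
  classical
  have hex : ∃ m, n ≤ denomSeq α m := ⟨n, le_denomSeq hα n⟩
  obtain ⟨k, hk⟩ : ∃ k, Nat.find hex = k + 1 := by
    refine Nat.exists_eq_add_one.2 (Nat.pos_of_ne_zero fun h => ?_)
    have := Nat.find_spec hex
    rw [h] at this
    simp [denomSeq] at this
    omega
  exact ⟨k, not_le.1 (Nat.find_min hex (by omega)), hk ▸ Nat.find_spec hex⟩

theorem fillDist_le {x : ℕ → ℝ} {n : ℕ} {M : ℝ}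
    (h : ∀ y ∈ Icc (0 : ℝ) 1, ∃ i < n, |y - x i| ≤ M) : fillDist x n ≤ M := by
  have : Nonempty (Icc (0 : ℝ) 1) := ⟨⟨0, left_mem_Icc.2 zero_le_one⟩⟩
  refine ciSup_le fun y => ?_
  obtain ⟨i, hi, hy⟩ := h y y.2
  exact ciInf_le_of_le ⟨0, by rintro _ ⟨i, rfl⟩; positivity⟩ ⟨i, hi⟩ hy

theorem half_le_sepRad {x : ℕ → ℝ} {n : ℕ} {δ : ℝ} (hn : 2 ≤ n)
    (h : ∀ i j, i < j → j < n → δ ≤ |x i - x j|) : δ / 2 ≤ sepRad x n := by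
  have : Nonempty {p : Fin n × Fin n // p.1 < p.2} :=
    ⟨⟨(⟨0, by omega⟩, ⟨1, by omega⟩), Fin.mk_lt_mk.2 one_pos⟩⟩
  have hinf : δ ≤ ⨅ p : {p : Fin n × Fin n // p.1 < p.2}, |x p.1.1 - x p.1.2| :=
    le_ciInf fun p => h _ _ p.2 p.1.2.2
  rw [sepRad]
  linarith

theorem fillDist_kron_le (hα : Irrational α) {k n : ℕ} (hkn : denomSeq α k < n) :
    fillDist (kron α) n ≤ (partialQuot α (k + 1) + 1) * eta α (k + 1) := by
  have hq := denomSeq_pos hα k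
  have hqR : (0 : ℝ) < denomSeq α k := by exact_mod_cast hq
  have hε := abs_denomSeq_mul_sub_numSeq hα k
  have ha : (1 : ℝ) ≤ partialQuot α (k + 1) := by exact_mod_cast one_le_partialQuot_succ hα k
  have hηk := eta_le_partialQuot_add_one_mul hα k
  have hinv : 1 / (denomSeq α k : ℝ) ≤ eta α k + eta α (k + 1) := by
    rw [div_le_iff₀ hqR]; linarith [one_le_denomSeq_mul_eta_add hα k]
  have hη := eta_pos hα (k + 1)
  have hgrid : ∀ j < denomSeq α k, ∃ x ∈ kron α '' Iio n,
      x - j / denomSeq α k ∈ uIcc 0 (denomSeq α k * Int.fract α - numSeq α k) := by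
    intro j hj
    obtain ⟨i, hi, hmem⟩ := exists_fract_mul_sub_mem_uIcc (coprime_numSeq_denomSeq k)
      (by rw [hε]; exact denomSeq_mul_eta_succ_lt_one hα k) hj
    exact ⟨kron α i, ⟨i, hi.trans hkn, rfl⟩, by rwa [kron_eq_fract_mul_fract]⟩
  have hlast : ∃ x ∈ kron α '' Iio n,
      x ∈ Icc (1 - (partialQuot α (k + 1) + 1) * eta α (k + 1)) 1 := by
    obtain ⟨i, hi, hle⟩ := exists_le_denomSeq_one_sub_eta_le_kron hα k
    exact ⟨kron α i, ⟨i, hi.trans_lt hkn, rfl⟩, by linarith, (Int.fract_lt_one _).le⟩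
  refine fillDist_le fun y hy => ?_
  obtain ⟨_, ⟨i, hi, rfl⟩, hiy⟩ := exists_abs_sub_le_of_near_grid hq hgrid hlast
    (by rw [hε]; nlinarith) (by rw [hε]; nlinarith) hy
  exact ⟨i, hi, hiy⟩

theorem half_eta_le_sepRad_kron (hα : Irrational α) {k n : ℕ} (hn : 2 ≤ n)
    (hnk : n ≤ denomSeq α (k + 1)) : eta α (k + 1) / 2 ≤ sepRad (kron α) n :=
  half_le_sepRad hn fun _ _ hij hj => eta_succ_le_abs_kron_sub hα hij (by omega)

theorem kronecker_badly_approximable_quasi_uniform_general (α : ℝ)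
    (hirr : Irrational α) (B : ℕ) (hB : ∀ j ≥ 1, partialQuot α j ≤ B) :
    ∀ n ≥ 2, fillDist (kron α) n / sepRad (kron α) n ≤
      2 + 2 * ⨆ j : ℕ, (partialQuot α (j + 1) : ℝ) := by
  intro n hn
  obtain ⟨k, hkn, hnk⟩ := exists_denomSeq_lt_le hirr hn
  set A := ⨆ j : ℕ, (partialQuot α (j + 1) : ℝ)
  have hbdd : BddAbove (range fun j => (partialQuot α (j + 1) : ℝ)) :=
    ⟨B, by rintro _ ⟨j, rfl⟩; exact Nat.cast_le.2 (hB (j + 1) j.succ_pos)⟩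
  have ha : (partialQuot α (k + 1) : ℝ) ≤ A := le_ciSup hbdd k
  have ha0 : (0 : ℝ) ≤ partialQuot α (k + 1) := Nat.cast_nonneg _
  have hη := eta_pos hirr (k + 1)
  have hsep := half_eta_le_sepRad_kron hirr hn hnk
  rw [div_le_iff₀ (by linarith)]
  calc fillDist (kron α) n ≤ (partialQuot α (k + 1) + 1) * eta α (k + 1) :=
        fillDist_kron_le hirr hkn
    _ ≤ (2 + 2 * A) * (eta α (k + 1) / 2) := by nlinarith
    _ ≤ (2 + 2 * A) * sepRad (kron α) n := by gcongr; linarith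

/-- If `α` is badly approximable then the Kronecker sequence is quasi-uniform,
with mesh ratio bounded by `2 + 2·sup_{j≥1} a_j`. -/
theorem kronecker_badly_approximable_quasi_uniform (α : ℝ) (hpos : 0 < α)
    (hirr : Irrational α) (B : ℕ) (hB : ∀ j ≥ 1, partialQuot α j ≤ B) :
    ∀ n ≥ 2, fillDist (kron α) n / sepRad (kron α) n ≤
      2 + 2 * ⨆ j : ℕ, (partialQuot α (j + 1) : ℝ) :=
  kronecker_badly_approximable_quasi_uniform_general α hirr B hB
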